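/- Let P_k denote the path on k vertices and let p ≥ 1 be an integer. If k > p, then C_{p,1}^T(P_k) ≥ 2p. -/

import Mathlib

open SimpleGraph

/-- A (p,1)-total labelling of `G`: adjacent vertices get distinct colors, edges sharing an
endpoint get distinct colors, and a vertex and an incident edge differ by at least `p`. -/
def IsPOneTotalLabelling {V : Type*} (G : SimpleGraph V) (p : ℕ)
    (cv : V → ℤ) (ce : G.edgeSet → ℤ) : Prop :=
  (∀ u v : V, G.Adj u v → cv u ≠ cv v) ∧
  (∀ e f : G.edgeSet, e ≠ f → (∃ v : V, v ∈ (e : Sym2 V) ∧ v ∈ (f : Sym2 V)) → ce e ≠ ce f) ∧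
  (∀ (v : V) (e : G.edgeSet), v ∈ (e : Sym2 V) → (p : ℤ) ≤ |cv v - ce e|)

/-- χ_{p,1}^T(G): least `k` such that `G` has a (p,1)-total labelling with colors in
`{0, …, k-1}`. -/
noncomputable def pOneTotalChromatic {V : Type*} (G : SimpleGraph V) (p : ℕ) : ℕ :=
  sInf {k : ℕ | ∃ cv ce, IsPOneTotalLabelling G p cv ce ∧
    (∀ v : V, cv v ∈ Set.Ico (0 : ℤ) k) ∧ (∀ e : G.edgeSet, ce e ∈ Set.Ico (0 : ℤ) k)}

/-- λ_p^T(G): least `k` such that `G` has a (p,1)-total labelling with colors in `{0, …, k}`. -/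
noncomputable def pOneTotalNumber {V : Type*} (G : SimpleGraph V) (p : ℕ) : ℕ :=
  sInf {k : ℕ | ∃ cv ce, IsPOneTotalLabelling G p cv ce ∧
    (∀ v : V, cv v ∈ Set.Icc (0 : ℤ) k) ∧ (∀ e : G.edgeSet, ce e ∈ Set.Icc (0 : ℤ) k)}

/-- `G` is `L`-(p,1)-total labelable for list assignment `(Lv, Le)`. -/
def ListPOneTotalLabelable {V : Type*} (G : SimpleGraph V) (p : ℕ)
    (Lv : V → Finset ℤ) (Le : G.edgeSet → Finset ℤ) : Prop :=
  ∃ cv ce, IsPOneTotalLabelling G p cv ce ∧ (∀ v, cv v ∈ Lv v) ∧ (∀ e, ce e ∈ Le e)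

/-- C_{p,1}^T(G): least `k` such that `G` is `L`-(p,1)-total labelable for every list
assignment whose lists all have size `k`. -/
noncomputable def pOneTotalChoosability {V : Type*} (G : SimpleGraph V) (p : ℕ) : ℕ :=
  sInf {k : ℕ | ∀ (Lv : V → Finset ℤ) (Le : G.edgeSet → Finset ℤ),
    (∀ v, (Lv v).card = k) → (∀ e, (Le e).card = k) → ListPOneTotalLabelable G p Lv Le}

/-- An L(p,q)-labelling of `H`. -/
def IsLpqLabelling {V : Type*} (H : SimpleGraph V) (p q : ℕ) (f : V → ℤ) : Prop :=
  (∀ u v : V, H.Adj u v → (p : ℤ) ≤ |f u - f v|) ∧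
  (∀ u v : V, H.dist u v = 2 → (q : ℤ) ≤ |f u - f v|)

/-- χ^{p,q}(H): least `k` such that `H` has an L(p,q)-labelling with colors in `{0, …, k-1}`. -/
noncomputable def LpqChromatic {V : Type*} (H : SimpleGraph V) (p q : ℕ) : ℕ :=
  sInf {k : ℕ | ∃ f, IsLpqLabelling H p q f ∧ ∀ v : V, f v ∈ Set.Ico (0 : ℤ) k}

/-- χ_l^{p,q}(H): least `k` such that from every assignment of lists of size `k`, `H` has an
L(p,q)-labelling choosing each vertex's color from its list. -/
noncomputable def listLpqChromatic {V : Type*} (H : SimpleGraph V) (p q : ℕ) : ℕ :=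
  sInf {k : ℕ | ∀ L : V → Finset ℤ, (∀ v, (L v).card = k) →
    ∃ f, IsLpqLabelling H p q f ∧ ∀ v : V, f v ∈ L v}

/-- The star `K_{1,n}`: vertex `0` is the center, adjacent to the `n` leaves. -/
def starGraph (n : ℕ) : SimpleGraph (Fin (n + 1)) :=
  SimpleGraph.fromRel (fun v w => v = 0 ∨ w = 0)

/-- The incidence graph `S_I(G)`: replace every edge of `G` by a path of length 2. -/
def incidenceGraph {V : Type*} (G : SimpleGraph V) : SimpleGraph (V ⊕ G.edgeSet) where
  Adj x y :=
    (∃ (v : V) (e : G.edgeSet), x = Sum.inl v ∧ y = Sum.inr e ∧ v ∈ (e : Sym2 V)) ∨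
    (∃ (v : V) (e : G.edgeSet), x = Sum.inr e ∧ y = Sum.inl v ∧ v ∈ (e : Sym2 V))
  symm := by
    constructor
    rintro x y (⟨v, e, rfl, rfl, h⟩ | ⟨v, e, rfl, rfl, h⟩)
    · exact Or.inr ⟨v, e, rfl, rfl, h⟩
    · exact Or.inl ⟨v, e, rfl, rfl, h⟩
  loopless := by
    constructor
    rintro x (⟨v, e, h1, h2, -⟩ | ⟨v, e, h1, h2, -⟩) <;> subst h1 <;> simp at h2

/-- `H` is a minor of `G`: there are pairwise disjoint nonempty connected branch sets in `G`,
one for each vertex of `H`, with an edge of `G` between the branch sets of any two vertices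
adjacent in `H`. -/
def IsGraphMinor {W V : Type*} (H : SimpleGraph W) (G : SimpleGraph V) : Prop :=
  ∃ B : W → Set V,
    (∀ w, (B w).Nonempty) ∧
    (∀ w, (G.induce (B w)).Connected) ∧
    (∀ w₁ w₂, w₁ ≠ w₂ → Disjoint (B w₁) (B w₂)) ∧
    (∀ w₁ w₂, H.Adj w₁ w₂ → ∃ v₁ ∈ B w₁, ∃ v₂ ∈ B w₂, G.Adj v₁ v₂)

/-- A graph is outerplanar iff it has neither `K₄` nor `K_{2,3}` as a minor. -/
def Outerplanar {V : Type*} (G : SimpleGraph V) : Prop :=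
  ¬ IsGraphMinor (completeGraph (Fin 4)) G ∧
  ¬ IsGraphMinor (completeBipartiteGraph (Fin 2) (Fin 3)) G

/-!
A (p,1)-total labelling of `P_k` is a sequence `x₀, x₁, …` (vertex `i` at `2i`, edge `i` at
`2i + 1`) whose consecutive terms are at least `p` apart and whose terms two apart differ.
From lists of size `2p + 1` such a sequence can be chosen greedily, so the choosability is finite.
For `m < 2p`, give vertex `i` the list `[i, i + m)` and edge `i` the list `[p - i, p - i + m)`.
By induction the colour of vertex `i ≤ p` is below `2p - i`; for `i = p` this contradicts its list.
-/

open Finset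

lemma exists_mem_ne_le_abs_sub {p : ℕ} (hp : 1 ≤ p) {L : Finset ℤ} (hL : 2 * p < #L)
    (c d : ℤ) : ∃ x ∈ L, x ≠ d ∧ (p : ℤ) ≤ |x - c| := by
  have hcard : #(insert d (Ioo (c - p) (c + p))) < #L :=
    (card_insert_le _ _).trans_lt (by rw [Int.card_Ioo]; omega)
  obtain ⟨x, hxL, hx⟩ := exists_mem_notMem_of_card_lt_card hcard
  simp only [mem_insert, mem_Ioo, not_or, not_and_or, not_lt] at hx
  exact ⟨x, hxL, hx.1, le_abs'.2 (by omega)⟩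

def greedySeq (f : ℕ → ℤ → ℤ → ℤ) : ℕ → ℤ
  | 0 => f 0 0 0
  | 1 => f 1 (greedySeq f 0) (greedySeq f 0)
  | j + 2 => f (j + 2) (greedySeq f (j + 1)) (greedySeq f j)

lemma exists_seq_mem_le_abs_sub_ne {p : ℕ} (hp : 1 ≤ p) (M : ℕ → Finset ℤ)
    (hM : ∀ j, 2 * p < #(M j)) :
    ∃ x : ℕ → ℤ, (∀ j, x j ∈ M j) ∧ (∀ j, (p : ℤ) ≤ |x (j + 1) - x j|) ∧
      ∀ j, x (j + 2) ≠ x j := by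
  choose f hfM hfne hfabs using fun j => exists_mem_ne_le_abs_sub hp (hM j)
  refine ⟨greedySeq f, fun j => ?_, fun j => ?_, fun j => hfne _ _ _⟩
  · match j with
    | 0 | 1 | _ + 2 => exact hfM _ _ _
  · match j with
    | 0 | _ + 1 => exact hfabs _ _ _

namespace SimpleGraph.pathGraph

variable {k : ℕ}

def edge (i : ℕ) (h : i + 1 < k) : (pathGraph k).edgeSet :=
  ⟨s(⟨i, by omega⟩, ⟨i + 1, h⟩), by simp [pathGraph_adj]⟩

def edgeIndex (e : (pathGraph k).edgeSet) : ℕ := (Sym2.inf (e : Sym2 (Fin k))).val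

lemma edgeIndex_edge {i : ℕ} (h : i + 1 < k) : edgeIndex (edge i h) = i := by
  simp [edgeIndex, edge, Sym2.inf_mk]

lemma mem_edge_iff {i : ℕ} (h : i + 1 < k) (v : Fin k) :
    v ∈ (edge i h : Sym2 (Fin k)) ↔ v.val = i ∨ v.val = i + 1 := by
  simp [edge, Fin.ext_iff]

lemma exists_eq_edge (e : (pathGraph k).edgeSet) : ∃ i h, e = edge i h := by
  obtain ⟨e, he⟩ := e
  induction e using Sym2.ind with
  | _ u v =>
    rw [mem_edgeSet, pathGraph_adj] at he
    rcases he with huv | hvu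
    · exact ⟨u, by omega, Subtype.ext <| by simp [edge, Fin.ext_iff, ← huv]⟩
    · exact ⟨v, by omega, Subtype.ext <| by simp [edge, Fin.ext_iff, ← hvu]⟩

end SimpleGraph.pathGraph

open SimpleGraph.pathGraph

theorem isPOneTotalLabelling_pathGraph_of_seq {p k : ℕ} {x : ℕ → ℤ}
    (hdist : ∀ j, (p : ℤ) ≤ |x (j + 1) - x j|) (hne : ∀ j, x (j + 2) ≠ x j) :
    IsPOneTotalLabelling (pathGraph k) p (fun v => x (2 * v))
      (fun e => x (2 * edgeIndex e + 1)) := by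
  refine ⟨fun u v huv => ?_, fun e f hef hshare => ?_, fun v e hve => ?_⟩
  · rw [pathGraph_adj] at huv
    rcases huv with huv | huv
    · simpa [← huv, mul_add] using (hne (2 * u)).symm
    · simpa [← huv, mul_add] using hne (2 * v)
  · obtain ⟨i, hi, rfl⟩ := exists_eq_edge e
    obtain ⟨j, hj, rfl⟩ := exists_eq_edge f
    obtain ⟨w, hwi, hwj⟩ := hshare
    rw [mem_edge_iff] at hwi hwj
    have hij : i ≠ j := by rintro rfl; exact hef rfl
    simp only [edgeIndex_edge]
    obtain rfl | rfl : j = i + 1 ∨ i = j + 1 := by omega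
    · exact (hne (2 * i + 1)).symm
    · exact hne (2 * j + 1)
  · obtain ⟨i, hi, rfl⟩ := exists_eq_edge e
    rw [mem_edge_iff] at hve
    simp only [edgeIndex_edge]
    rcases hve with hv | hv
    · rw [hv, abs_sub_comm]
      exact hdist (2 * i)
    · simpa [hv, mul_add] using hdist (2 * i + 1)

theorem listPOneTotalLabelable_pathGraph {p k : ℕ} (hp : 1 ≤ p) (Lv : Fin k → Finset ℤ)
    (Le : (pathGraph k).edgeSet → Finset ℤ) (hLv : ∀ v, 2 * p < #(Lv v))
    (hLe : ∀ e, 2 * p < #(Le e)) : ListPOneTotalLabelable (pathGraph k) p Lv Le := by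
  let pad : Finset ℤ := Icc 0 (2 * p)
  let M : ℕ → Finset ℤ := fun j =>
    if Even j then (if h : j / 2 < k then Lv ⟨j / 2, h⟩ else pad)
    else (if h : j / 2 + 1 < k then Le (edge (j / 2) h) else pad)
  have hpad : 2 * p < #pad := by simp [pad]
  have hM : ∀ j, 2 * p < #(M j) := by
    intro j
    simp only [M]
    split_ifs <;> simp [hLv, hLe, hpad]
  obtain ⟨x, hxM, hdist, hne⟩ := exists_seq_mem_le_abs_sub_ne hp M hM
  refine ⟨_, _, isPOneTotalLabelling_pathGraph_of_seq hdist hne, fun v => ?_, fun e => ?_⟩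
  · simpa [M, v.isLt] using hxM (2 * v)
  · obtain ⟨i, hi, rfl⟩ := exists_eq_edge e
    have hdiv : (2 * i + 1) / 2 = i := by omega
    simpa [M, edgeIndex_edge, hdiv, hi] using hxM (2 * i + 1)

theorem not_listPOneTotalLabelable_pathGraph {p k m : ℕ} (hk : p < k) (hm : m < 2 * p) :
    ¬ ListPOneTotalLabelable (pathGraph k) p (fun v => Ico (v : ℤ) (v + m))
      (fun e => Ico ((p : ℤ) - edgeIndex e) (p - edgeIndex e + m)) := by
  rintro ⟨cv, ce, ⟨-, -, hdist⟩, hcv, hce⟩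
  have hbound : ∀ i (h : i < k), i ≤ p → cv ⟨i, h⟩ + i < 2 * p := by
    intro i
    induction i with
    | zero =>
      intro h _
      have hcv0 := hcv ⟨0, h⟩
      simp only [mem_Ico] at hcv0
      push_cast at hcv0 ⊢
      omega
    | succ i ih =>
      intro h hip
      have hprev := ih (by omega) (by omega)
      have hcvi := hcv ⟨i, by omega⟩
      have hcvi1 := hcv ⟨i + 1, h⟩
      have hcei := hce (edge i h)
      have hA := hdist ⟨i, by omega⟩ (edge i h) ((mem_edge_iff h _).2 (Or.inl rfl))
      have hB := hdist ⟨i + 1, h⟩ (edge i h) ((mem_edge_iff h _).2 (Or.inr rfl))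
      simp only [mem_Ico, edgeIndex_edge] at hcvi hcvi1 hcei
      -- The edge colour is too low to lie `p` below `cv i`, so it is at least `p + i`; then
      -- `cv (i + 1)` is too low to lie `p` above it, so it lies `p` below it.
      rw [le_abs'] at hA hB
      push_cast at *
      omega
  have hcvp := hcv ⟨p, hk⟩
  simp only [mem_Ico] at hcvp
  have := hbound p hk le_rfl
  omega

/-- if k > p then C_{p,1}^T(P_k) ≥ 2p. -/
theorem pOneTotalChoosability_pathGraph_ge (p k : ℕ) (hp : 1 ≤ p) (hk : p < k) :
    2 * p ≤ pOneTotalChoosability (SimpleGraph.pathGraph k) p := by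
  refine le_csInf ⟨2 * p + 1, fun Lv Le hLv hLe =>
    listPOneTotalLabelable_pathGraph hp Lv Le (by simp [hLv]) (by simp [hLe])⟩ fun m hm => ?_
  by_contra! hm2p
  exact not_listPOneTotalLabelable_pathGraph hk hm2p (hm _ _ (by simp) (by simp))
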